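/- Define the normalized odds ratio õR(x,y) = OR(x,y) / E[OR(X,Y) | R=1, X=x, G=1]. Then under M ⊥ R | X, Y, G=1, for every x and y, õR(x,y) = p(Y=y | R=0, X=x, G=1) / p(Y=y | R=1, X=x, G=1). -/
import Mathlib


open Finset Set Real

noncomputable def Pr {Ω : Type*} [Fintype Ω] (μ : Ω → ℝ) (A : Set Ω) : ℝ :=
  ∑ ω, A.indicator μ ω

noncomputable def cPr {Ω : Type*} [Fintype Ω] (μ : Ω → ℝ) (A B : Set Ω) : ℝ :=
  Pr μ (A ∩ B) / Pr μ B

noncomputable def cE {Ω : Type*} [Fintype Ω] (μ : Ω → ℝ) (f : Ω → ℝ) (B : Set Ω) : ℝ :=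
  (∑ ω, B.indicator (fun ω' => μ ω' * f ω') ω) / Pr μ B

noncomputable def OddsR {Ω 𝓧 : Type*} [Fintype Ω] (μ : Ω → ℝ) (X : Ω → 𝓧) (Y : Ω → ℝ)
    (R G : Ω → ℕ) (x : 𝓧) (y : ℝ) : ℝ :=
  (cPr μ {ω | R ω = 0} {ω | X ω = x ∧ Y ω = y ∧ G ω = 1} *
      cPr μ {ω | R ω = 1} {ω | X ω = x ∧ Y ω = 0 ∧ G ω = 1}) /
  (cPr μ {ω | R ω = 1} {ω | X ω = x ∧ Y ω = y ∧ G ω = 1} *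
      cPr μ {ω | R ω = 0} {ω | X ω = x ∧ Y ω = 0 ∧ G ω = 1})

section aux
variable {Ω : Type*} [Fintype Ω]

lemma sum_indicator_filter (f : Ω → ℝ) (p : Ω → Prop) [DecidablePred p] :
    ∑ ω, ({ω | p ω} : Set Ω).indicator f ω = ∑ ω ∈ Finset.univ.filter p, f ω := by
  rw [Finset.sum_filter]
  refine Finset.sum_congr rfl fun ω _ => ?_
  by_cases h : p ω <;> simp [Set.indicator_apply, h]

lemma Pr_filter (μ : Ω → ℝ) (p : Ω → Prop) [DecidablePred p] :
    Pr μ {ω | p ω} = ∑ ω ∈ Finset.univ.filter p, μ ω :=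
  sum_indicator_filter μ p

lemma Pr_mono (μ : Ω → ℝ) (hμ0 : ∀ ω, 0 ≤ μ ω) {A B : Set Ω} (h : A ⊆ B) :
    Pr μ A ≤ Pr μ B :=
  Finset.sum_le_sum fun ω _ => Set.indicator_le_indicator_of_subset h hμ0 ω

end aux

theorem stmt7
    {Ω 𝓧 𝓜 : Type*} [Fintype Ω]
    (μ : Ω → ℝ) (X : Ω → 𝓧) (M : Ω → 𝓜) (Y : Ω → ℝ) (R G : Ω → ℕ)
    (hμ0 : ∀ ω, 0 ≤ μ ω) (hμ1 : ∑ ω, μ ω = 1)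
    (hR : ∀ ω, R ω = 0 ∨ R ω = 1)
    (h0Y : (0 : ℝ) ∈ Set.range Y)
    (hpos : ∀ x ∈ Set.range X, ∀ m ∈ Set.range M, ∀ y ∈ Set.range Y, ∀ r : ℕ,
      (r = 0 ∨ r = 1) →
      0 < Pr μ {ω | X ω = x ∧ M ω = m ∧ Y ω = y ∧ R ω = r ∧ G ω = 1})
    (hCI : ∀ (m : 𝓜) (r : ℕ) (x : 𝓧) (y : ℝ),
      0 < Pr μ {ω | X ω = x ∧ Y ω = y ∧ G ω = 1} →
      cPr μ {ω | M ω = m ∧ R ω = r} {ω | X ω = x ∧ Y ω = y ∧ G ω = 1} =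
        cPr μ {ω | M ω = m} {ω | X ω = x ∧ Y ω = y ∧ G ω = 1} *
        cPr μ {ω | R ω = r} {ω | X ω = x ∧ Y ω = y ∧ G ω = 1})
 :
    ∀ x ∈ Set.range X, ∀ y ∈ Set.range Y,
      OddsR μ X Y R G x y /
          cE μ (fun ω => OddsR μ X Y R G (X ω) (Y ω)) {ω | R ω = 1 ∧ X ω = x ∧ G ω = 1} =
        cPr μ {ω | Y ω = y} {ω | R ω = 0 ∧ X ω = x ∧ G ω = 1} /
          cPr μ {ω | Y ω = y} {ω | R ω = 1 ∧ X ω = x ∧ G ω = 1} := by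
  classical
  intro x hx y hy
  obtain ⟨ω₀⟩ : Nonempty Ω := by
    by_contra h
    rw [not_nonempty_iff] at h
    haveI := h
    rw [Finset.univ_eq_empty, Finset.sum_empty] at hμ1
    norm_num at hμ1
  have hm : M ω₀ ∈ Set.range M := ⟨ω₀, rfl⟩
  -- abbreviations
  set a : ℝ → ℝ := fun y' => Pr μ {ω | R ω = 0 ∧ X ω = x ∧ Y ω = y' ∧ G ω = 1} with ha
  set b : ℝ → ℝ := fun y' => Pr μ {ω | R ω = 1 ∧ X ω = x ∧ Y ω = y' ∧ G ω = 1} with hb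
  have apos : ∀ y' ∈ Set.range Y, 0 < a y' := by
    intro y' hy'
    refine lt_of_lt_of_le (hpos x hx (M ω₀) hm y' hy' 0 (Or.inl rfl)) (Pr_mono μ hμ0 ?_)
    intro ω hω
    exact ⟨hω.2.2.2.1, hω.1, hω.2.2.1, hω.2.2.2.2⟩
  have bpos : ∀ y' ∈ Set.range Y, 0 < b y' := by
    intro y' hy'
    refine lt_of_lt_of_le (hpos x hx (M ω₀) hm y' hy' 1 (Or.inr rfl)) (Pr_mono μ hμ0 ?_)
    intro ω hω
    exact ⟨hω.2.2.2.1, hω.1, hω.2.2.1, hω.2.2.2.2⟩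
  set A : ℝ := Pr μ {ω | R ω = 0 ∧ X ω = x ∧ G ω = 1} with hAdef
  set B : ℝ := Pr μ {ω | R ω = 1 ∧ X ω = x ∧ G ω = 1} with hBdef
  have Apos : 0 < A := by
    refine lt_of_lt_of_le (apos 0 h0Y) (Pr_mono μ hμ0 ?_)
    intro ω hω
    exact ⟨hω.1, hω.2.1, hω.2.2.2⟩
  have Bpos : 0 < B := by
    refine lt_of_lt_of_le (bpos 0 h0Y) (Pr_mono μ hμ0 ?_)
    intro ω hω
    exact ⟨hω.1, hω.2.1, hω.2.2.2⟩
  have Ppos : ∀ y' ∈ Set.range Y, 0 < Pr μ {ω | X ω = x ∧ Y ω = y' ∧ G ω = 1} := by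
    intro y' hy'
    refine lt_of_lt_of_le (apos y' hy') (Pr_mono μ hμ0 ?_)
    intro ω hω
    exact ⟨hω.2.1, hω.2.2.1, hω.2.2.2⟩
  -- cPr computations
  have hcpr0 : ∀ y' : ℝ, cPr μ {ω | R ω = 0} {ω | X ω = x ∧ Y ω = y' ∧ G ω = 1}
      = a y' / Pr μ {ω | X ω = x ∧ Y ω = y' ∧ G ω = 1} := by
    intro y'
    have hset : ({ω | R ω = 0} : Set Ω) ∩ {ω | X ω = x ∧ Y ω = y' ∧ G ω = 1}
        = {ω | R ω = 0 ∧ X ω = x ∧ Y ω = y' ∧ G ω = 1} := by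
      ext ω; simp [Set.mem_setOf_eq]
    rw [cPr, hset]
  have hcpr1 : ∀ y' : ℝ, cPr μ {ω | R ω = 1} {ω | X ω = x ∧ Y ω = y' ∧ G ω = 1}
      = b y' / Pr μ {ω | X ω = x ∧ Y ω = y' ∧ G ω = 1} := by
    intro y'
    have hset : ({ω | R ω = 1} : Set Ω) ∩ {ω | X ω = x ∧ Y ω = y' ∧ G ω = 1}
        = {ω | R ω = 1 ∧ X ω = x ∧ Y ω = y' ∧ G ω = 1} := by
      ext ω; simp [Set.mem_setOf_eq]
    rw [cPr, hset]
  have hOR : ∀ y' ∈ Set.range Y, OddsR μ X Y R G x y' = a y' * b 0 / (b y' * a 0) := by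
    intro y' hy'
    rw [OddsR, hcpr0, hcpr0, hcpr1, hcpr1]
    have h1 := (Ppos y' hy').ne'
    have h2 := (Ppos 0 h0Y).ne'
    field_simp
  -- the conditional expectation
  have hcE : cE μ (fun ω => OddsR μ X Y R G (X ω) (Y ω)) {ω | R ω = 1 ∧ X ω = x ∧ G ω = 1}
      = b 0 * A / (a 0 * B) := by
    rw [cE]
    have hden : Pr μ {ω | R ω = 1 ∧ X ω = x ∧ G ω = 1} = B := rfl
    have hfib : ∀ (r : ℕ) (c : ℝ → ℝ) (y' : ℝ),
        ∑ ω ∈ (Finset.univ.filter fun ω => R ω = r ∧ X ω = x ∧ G ω = 1).filter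
          (fun ω => Y ω = y'), μ ω
        = Pr μ {ω | R ω = r ∧ X ω = x ∧ Y ω = y' ∧ G ω = 1} := by
      intro r c y'
      rw [Pr_filter, Finset.filter_filter]
      apply Finset.sum_congr _ (fun _ _ => rfl)
      apply Finset.filter_congr
      intro ω _
      constructor
      · rintro ⟨⟨h1, h2, h3⟩, h4⟩; exact ⟨h1, h2, h4, h3⟩
      · rintro ⟨h1, h2, h3, h4⟩; exact ⟨⟨h1, h2, h4⟩, h3⟩
    have hnum : (∑ ω, ({ω | R ω = 1 ∧ X ω = x ∧ G ω = 1} : Set Ω).indicator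
        (fun ω' => μ ω' * OddsR μ X Y R G (X ω') (Y ω')) ω) = (b 0 / a 0) * A := by
      rw [sum_indicator_filter]
      rw [← Finset.sum_fiberwise_of_maps_to
        (t := Finset.univ.image Y) (g := Y)
        (fun ω _ => Finset.mem_image_of_mem Y (Finset.mem_univ ω))]
      have hstep : ∀ y' ∈ Finset.univ.image Y,
          (∑ ω ∈ (Finset.univ.filter fun ω => R ω = 1 ∧ X ω = x ∧ G ω = 1).filter
            (fun ω => Y ω = y'), μ ω * OddsR μ X Y R G (X ω) (Y ω))
          = (b 0 / a 0) * a y' := by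
        intro y' hy'
        obtain ⟨ω', _, rfl⟩ := Finset.mem_image.mp hy'
        have hy'' : Y ω' ∈ Set.range Y := ⟨ω', rfl⟩
        have : (∑ ω ∈ (Finset.univ.filter fun ω => R ω = 1 ∧ X ω = x ∧ G ω = 1).filter
            (fun ω => Y ω = Y ω'), μ ω * OddsR μ X Y R G (X ω) (Y ω))
            = ∑ ω ∈ (Finset.univ.filter fun ω => R ω = 1 ∧ X ω = x ∧ G ω = 1).filter
            (fun ω => Y ω = Y ω'), μ ω * (a (Y ω') * b 0 / (b (Y ω') * a 0)) := by
          refine Finset.sum_congr rfl fun ω hω => ?_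
          have h1 := Finset.mem_filter.mp hω
          have h2 := Finset.mem_filter.mp h1.1
          rw [h1.2, h2.2.2.1, hOR (Y ω') hy'']
        rw [this, ← Finset.sum_mul, hfib 1 (fun _ => 0) (Y ω')]
        have hb' : b (Y ω') ≠ 0 := (bpos _ hy'').ne'
        have ha0 : a 0 ≠ 0 := (apos 0 h0Y).ne'
        field_simp
        ring
      rw [Finset.sum_congr rfl hstep, ← Finset.mul_sum]
      congr 1
      rw [hAdef, Pr_filter]
      rw [← Finset.sum_fiberwise_of_maps_to
        (t := Finset.univ.image Y) (g := Y)
        (fun ω _ => Finset.mem_image_of_mem Y (Finset.mem_univ ω))]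
      refine Finset.sum_congr rfl fun y' _ => ?_
      rw [hfib 0 (fun _ => 0) y']
    rw [hnum, hden]
    field_simp
  -- RHS cPr computations
  have hr0 : cPr μ {ω | Y ω = y} {ω | R ω = 0 ∧ X ω = x ∧ G ω = 1} = a y / A := by
    have hset : ({ω | Y ω = y} : Set Ω) ∩ {ω | R ω = 0 ∧ X ω = x ∧ G ω = 1}
        = {ω | R ω = 0 ∧ X ω = x ∧ Y ω = y ∧ G ω = 1} := by
      ext ω; simp [Set.mem_setOf_eq]; tauto
    rw [cPr, hset]
  have hr1 : cPr μ {ω | Y ω = y} {ω | R ω = 1 ∧ X ω = x ∧ G ω = 1} = b y / B := by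
    have hset : ({ω | Y ω = y} : Set Ω) ∩ {ω | R ω = 1 ∧ X ω = x ∧ G ω = 1}
        = {ω | R ω = 1 ∧ X ω = x ∧ Y ω = y ∧ G ω = 1} := by
      ext ω; simp [Set.mem_setOf_eq]; tauto
    rw [cPr, hset]
  rw [hOR y hy, hcE, hr0, hr1]
  have hay := (apos y hy).ne'
  have hby := (bpos y hy).ne'
  have ha0 := (apos 0 h0Y).ne'
  have hb0 := (bpos 0 h0Y).ne'
  have hA := Apos.ne'
  have hB := Bpos.ne'
  field_simp
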